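/- arXiv:1910.12788 — 6 statements merged into one kernel-verified Lean document; each statement's English description precedes it below -/
import Mathlib

section
/- Every real number α has at most one expression as an infinite continued fraction [c_1, c_2, c_3, …] with all c_i ∈ ℤ satisfying: |c_i| ≥ 2 for i > 1, and if c_i = ±2 for i > 1 then sgn(c_i) = sgn(c_{i+1}). -/
open Filter Topology

/-- Finite continued fraction of a list of integers. -/
noncomputable def cfL : List ℤ → ℝ
  | [] => 0
  | [c] => (c : ℝ)
  | c :: l => (c : ℝ) + (cfL l)⁻¹

/-!
For an admissible tail `e` every convergent `[e 0, …, e n]` lies within `1/2` of `e 0` and has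
absolute value at least `2`, and these closed bounds pass to the limit. Writing the value of an
expansion as `c 0 + β⁻¹` with `β` the value of its tail, the sign condition makes `|β| > 2`
strict, so two expansions `c 0 + β⁻¹ = d 0 + γ⁻¹` have integer heads at distance `< 1`. Hence
the heads agree, then the tails have the same value, and induction finishes.
-/

noncomputable def convergent (c : ℕ → ℤ) (n : ℕ) : ℝ :=
  cfL (List.ofFn fun i : Fin (n + 1) => c i)

@[simp]
lemma convergent_zero (c : ℕ → ℤ) : convergent c 0 = c 0 := rfl

lemma convergent_succ (c : ℕ → ℤ) (n : ℕ) :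
    convergent c (n + 1) = c 0 + (convergent (fun i => c (i + 1)) n)⁻¹ := by
  simp only [convergent, List.ofFn_succ, Fin.val_zero, Fin.val_succ]
  rfl

def IsAdmissible (e : ℕ → ℤ) : Prop :=
  ∀ i, 2 ≤ |e i| ∧ (|e i| = 2 → (e i).sign = (e (i + 1)).sign)

lemma IsAdmissible.tail {e : ℕ → ℤ} (he : IsAdmissible e) : IsAdmissible fun i => e (i + 1) :=
  fun i => he (i + 1)

lemma abs_inv_le_half {y : ℝ} (hy : 2 ≤ |y|) : |y⁻¹| ≤ 1 / 2 := by
  rw [abs_inv, one_div]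
  exact inv_anti₀ two_pos hy

lemma abs_inv_lt_half {y : ℝ} (hy : 2 < |y|) : |y⁻¹| < 1 / 2 := by
  rw [abs_inv, one_div]
  exact inv_strictAnti₀ two_pos hy

lemma two_lt_abs_add_inv {a b : ℤ} {y : ℝ} (ha : 2 ≤ |a|) (hab : |a| = 2 → a.sign = b.sign)
    (hyb : |y - b| ≤ 1 / 2) (hy : 2 ≤ |y|) : 2 < |a + y⁻¹| := by
  have hyb' := abs_le.1 hyb
  rcases (show |a| = 2 ∨ 3 ≤ |a| by omega) with h2 | h3
  · rcases (abs_eq zero_le_two).1 h2 with rfl | rfl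
    · have hb : (1 : ℝ) ≤ b := by
        have : 0 < b := Int.sign_eq_one_iff_pos.1 (hab h2).symm
        exact_mod_cast this
      have hy0 : 0 < y⁻¹ := inv_pos.2 (by linarith)
      rw [abs_of_pos (by push_cast; linarith)]
      push_cast
      linarith
    · have hb : (b : ℝ) ≤ -1 := by
        have : b < 0 := Int.sign_eq_neg_one_iff_neg.1 (hab h2).symm
        exact_mod_cast Int.le_sub_one_of_lt this
      have hy0 : y⁻¹ < 0 := inv_lt_zero.2 (by linarith)
      rw [abs_of_neg (by push_cast; linarith)]
      push_cast
      linarith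
  · have ha3 : (3 : ℝ) ≤ |(a : ℝ)| := by exact_mod_cast h3
    have := abs_inv_le_half hy
    have := abs_sub_abs_le_abs_sub (a : ℝ) (-y⁻¹)
    rw [abs_neg, sub_neg_eq_add] at this
    linarith

lemma IsAdmissible.abs_convergent_sub_le_and_two_le_abs {e : ℕ → ℤ} (he : IsAdmissible e)
    (n : ℕ) :
    |convergent e n - e 0| ≤ 1 / 2 ∧ 2 ≤ |convergent e n| := by
  induction n generalizing e with
  | zero =>
    simp only [convergent_zero, sub_self, abs_zero]
    exact ⟨by norm_num, by exact_mod_cast (he 0).1⟩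
  | succ n ih =>
    obtain ⟨hnear, hbig⟩ := ih he.tail
    rw [convergent_succ, add_sub_cancel_left]
    exact ⟨abs_inv_le_half hbig,
      (two_lt_abs_add_inv (he 0).1 (he 0).2 hnear hbig).le⟩

lemma tendsto_of_tendsto_inv {ι : Type*} {l : Filter ι} [l.NeBot] {u : ι → ℝ} {a B L : ℝ}
    (ha : 0 < a) (hu : ∀ i, a ≤ |u i|) (hB : ∀ i, |u i| ≤ B)
    (h : Tendsto (fun i => (u i)⁻¹) l (𝓝 L)) : Tendsto u l (𝓝 L⁻¹) := by
  have hL : B⁻¹ ≤ |L| := ge_of_tendsto h.abs <| Eventually.of_forall fun i => by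
    rw [abs_inv]
    exact inv_anti₀ (ha.trans_le (hu i)) (hB i)
  have hB0 : 0 < B⁻¹ := inv_pos.2 (ha.trans_le ((hu l.nonempty_of_neBot.some).trans (hB _)))
  simpa using h.inv₀ (abs_pos.1 (hB0.trans_le hL))

lemma exists_tendsto_convergent_tail {c : ℕ → ℤ} {α : ℝ} (hc : IsAdmissible fun i => c (i + 1))
    (hα : Tendsto (convergent c) atTop (𝓝 α)) :
    ∃ β, Tendsto (convergent fun i => c (i + 1)) atTop (𝓝 β) ∧ α = c 0 + β⁻¹ ∧
      |β - c 1| ≤ 1 / 2 ∧ 2 ≤ |β| := by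
  have hbd := hc.abs_convergent_sub_le_and_two_le_abs
  have hinv : Tendsto (fun n => (convergent (fun i => c (i + 1)) n)⁻¹) atTop (𝓝 (α - c 0)) := by
    have := ((tendsto_add_atTop_iff_nat 1).2 hα).sub_const (c 0 : ℝ)
    simpa only [convergent_succ, add_sub_cancel_left] using this
  have hβ := tendsto_of_tendsto_inv (B := |(c 1 : ℝ)| + 1 / 2) two_pos (fun n => (hbd n).2)
    (fun n => by
      linarith [abs_sub_abs_le_abs_sub (convergent (fun i => c (i + 1)) n) (c 1), (hbd n).1])
    hinv
  refine ⟨_, hβ, by rw [inv_inv]; ring, ?_, ?_⟩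
  · exact le_of_tendsto (hβ.sub_const _).abs (Eventually.of_forall fun n => (hbd n).1)
  · exact ge_of_tendsto hβ.abs (Eventually.of_forall fun n => (hbd n).2)

lemma exists_tendsto_convergent_tail_two_lt {c : ℕ → ℤ} {α : ℝ}
    (hc : IsAdmissible fun i => c (i + 1)) (hα : Tendsto (convergent c) atTop (𝓝 α)) :
    ∃ β, Tendsto (convergent fun i => c (i + 1)) atTop (𝓝 β) ∧ α = c 0 + β⁻¹ ∧ 2 < |β| := by
  obtain ⟨β, hβ, rfl, -⟩ := exists_tendsto_convergent_tail hc hα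
  obtain ⟨β', -, hββ', hnear, hbig⟩ := exists_tendsto_convergent_tail hc.tail hβ
  exact ⟨β, hβ, rfl, hββ' ▸ two_lt_abs_add_inv (hc 0).1 (hc 0).2 hnear hbig⟩

lemma Int.eq_of_add_inv_eq_add_inv {a b : ℤ} {x y : ℝ} (hx : 2 < |x|) (hy : 2 < |y|)
    (h : a + x⁻¹ = b + y⁻¹) : a = b := by
  have hlt : |((a - b : ℤ) : ℝ)| < 1 := by
    have : ((a - b : ℤ) : ℝ) = y⁻¹ - x⁻¹ := by push_cast; linarith
    rw [this]
    linarith [abs_sub (y⁻¹) (x⁻¹), abs_inv_lt_half hx, abs_inv_lt_half hy]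
  have : |a - b| < 1 := by exact_mod_cast hlt
  exact sub_eq_zero.1 (abs_lt_one_iff.1 this)

lemma head_eq_and_tendsto_convergent_tail {c d : ℕ → ℤ} {α : ℝ}
    (hc : IsAdmissible fun i => c (i + 1)) (hd : IsAdmissible fun i => d (i + 1))
    (hcα : Tendsto (convergent c) atTop (𝓝 α)) (hdα : Tendsto (convergent d) atTop (𝓝 α)) :
    c 0 = d 0 ∧ ∃ β, Tendsto (convergent fun i => c (i + 1)) atTop (𝓝 β) ∧
      Tendsto (convergent fun i => d (i + 1)) atTop (𝓝 β) := by
  obtain ⟨β, hβ, rfl, hβ2⟩ := exists_tendsto_convergent_tail_two_lt hc hcα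
  obtain ⟨γ, hγ, hβγ, hγ2⟩ := exists_tendsto_convergent_tail_two_lt hd hdα
  have h0 : c 0 = d 0 := Int.eq_of_add_inv_eq_add_inv hβ2 hγ2 hβγ
  rw [h0, add_right_inj, inv_inj] at hβγ
  exact ⟨h0, β, hβ, hβγ ▸ hγ⟩

lemma eq_of_tendsto_convergent {c d : ℕ → ℤ} {α : ℝ}
    (hc : IsAdmissible fun i => c (i + 1)) (hd : IsAdmissible fun i => d (i + 1))
    (hcα : Tendsto (convergent c) atTop (𝓝 α)) (hdα : Tendsto (convergent d) atTop (𝓝 α)) :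
    c = d := by
  funext n
  induction n generalizing c d α with
  | zero => exact (head_eq_and_tendsto_convergent_tail hc hd hcα hdα).1
  | succ n ih =>
    obtain ⟨-, β, hβc, hβd⟩ := head_eq_and_tendsto_convergent_tail hc hd hcα hdα
    exact ih hc.tail hd.tail hβc hβd

/-- Every real number has at most one expression as an infinite continued
fraction `[c 0, c 1, …]` with integer partial quotients satisfying
`|c i| ≥ 2` for `i ≥ 1` and the sign condition: if `c i = ±2` for `i ≥ 1`
then `sgn (c i) = sgn (c (i+1))`. -/
theorem stmt1 (α : ℝ) (c d : ℕ → ℤ)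
    (hc1 : ∀ i, 1 ≤ i → 2 ≤ |c i|)
    (hc2 : ∀ i, 1 ≤ i → |c i| = 2 → (c i).sign = (c (i+1)).sign)
    (hd1 : ∀ i, 1 ≤ i → 2 ≤ |d i|)
    (hd2 : ∀ i, 1 ≤ i → |d i| = 2 → (d i).sign = (d (i+1)).sign)
    (hcα : Tendsto (fun n => cfL (List.ofFn fun i : Fin (n+1) => c i)) atTop (nhds α))
    (hdα : Tendsto (fun n => cfL (List.ofFn fun i : Fin (n+1) => d i)) atTop (nhds α)) :
    c = d :=
  eq_of_tendsto_convergent (fun i => ⟨hc1 (i + 1) (by omega), hc2 (i + 1) (by omega)⟩)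
    (fun i => ⟨hd1 (i + 1) (by omega), hd2 (i + 1) (by omega)⟩) hcα hdα
end

section
/- For each real number α and each pair of nonnegative integers N, k with k ≥ 1, there exists at most one periodic continued fraction expansion α = [c_1, …, c_N, overline{c_{N+1}, …, c_{N+k}}] with all c_i ∈ ℤ and |c_i| > 2 for 1 ≤ i ≤ N + k. -/
open Filter Topology

/-- The eventually periodic sequence of partial quotients of the periodic
continued fraction `[c_1, …, c_N, overline{c_{N+1}, …, c_{N+k}}]`. -/
def pcfSeq (N k : ℕ) (c : Fin (N + k) → ℤ) (n : ℕ) : ℤ :=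
  if h : n < N then c ⟨n, lt_of_lt_of_le h (Nat.le_add_right N k)⟩
  else if hk : 0 < k then c ⟨N + (n - N) % k, Nat.add_lt_add_left (Nat.mod_lt _ hk) N⟩
  else 0

lemma cfL_cons' (c : ℤ) (l : List ℤ) (h : l ≠ []) :
    cfL (c :: l) = (c : ℝ) + (cfL l)⁻¹ := by
  cases l with
  | nil => exact absurd rfl h
  | cons x xs => rfl

lemma cfL_lb : ∀ (l : List ℤ), l ≠ [] → (∀ x ∈ l, 3 ≤ |x|) → (5:ℝ)/2 ≤ |cfL l|
  | [], h, _ => absurd rfl h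
  | [c], _, h => by
      have hc : (3:ℤ) ≤ |c| := h c (by simp)
      have hc' : (3:ℝ) ≤ |(c:ℝ)| := by exact_mod_cast hc
      simp only [cfL]
      linarith
  | c :: x :: l, _, h => by
      have ih := cfL_lb (x :: l) (by simp)
        (fun y hy => h y (List.mem_cons_of_mem _ hy))
      have hc : (3:ℤ) ≤ |c| := h c (by simp)
      have hc' : (3:ℝ) ≤ |(c:ℝ)| := by exact_mod_cast hc
      rw [cfL_cons' c (x :: l) (by simp)]
      set t := cfL (x :: l) with ht
      have htne : t ≠ 0 := by
        intro h0; rw [h0] at ih; simp at ih; linarith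
      have h1 : |t⁻¹| ≤ 2/5 := by
        rw [abs_inv]
        rw [inv_le_comm₀ (by linarith) (by norm_num)]
        linarith
      have h2 : |(c:ℝ)| ≤ |(c:ℝ) + t⁻¹| + |t⁻¹| := by
        calc |(c:ℝ)| = |((c:ℝ) + t⁻¹) + (-t⁻¹)| := by ring_nf
          _ ≤ |(c:ℝ) + t⁻¹| + |(-t⁻¹)| := abs_add_le _ _
          _ = |(c:ℝ) + t⁻¹| + |t⁻¹| := by rw [abs_neg]
      linarith

lemma cfL_ub (x : ℤ) (l : List ℤ) (h : ∀ y ∈ x :: l, 3 ≤ |y|) :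
    |cfL (x :: l)| ≤ |(x:ℝ)| + 1/2 := by
  cases l with
  | nil =>
      simp only [cfL]
      linarith [abs_nonneg ((x:ℝ))]
  | cons z zs =>
      have ih := cfL_lb (z :: zs) (by simp)
        (fun y hy => h y (List.mem_cons_of_mem _ hy))
      rw [cfL_cons' x (z :: zs) (by simp)]
      set t := cfL (z :: zs) with ht
      have h1 : |t⁻¹| ≤ 2/5 := by
        rw [abs_inv, inv_le_comm₀ (by linarith) (by norm_num)]
        linarith
      calc |(x:ℝ) + t⁻¹| ≤ |(x:ℝ)| + |t⁻¹| := abs_add_le _ _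
        _ ≤ |(x:ℝ)| + 1/2 := by linarith

lemma cfL_ofFn_succ {n : ℕ} (f : Fin (n+2) → ℤ) :
    cfL (List.ofFn f) = (f 0 : ℝ) + (cfL (List.ofFn fun i : Fin (n+1) => f i.succ))⁻¹ := by
  rw [List.ofFn_succ]
  exact cfL_cons' _ _ (by simp [List.ofFn_eq_nil_iff])

lemma mem_ofFn_bound {n : ℕ} (a : ℕ → ℤ) (ha : ∀ i, 3 ≤ |a i|) (g : Fin n → ℕ) :
    ∀ x ∈ List.ofFn (fun i : Fin n => a (g i)), 3 ≤ |x| := by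
  intro x hx
  rw [List.mem_ofFn] at hx
  obtain ⟨i, rfl⟩ := hx
  exact ha _

/-- The key head/tail extraction lemma. -/
lemma head_step (a : ℕ → ℤ) (ha : ∀ i, 3 ≤ |a i|) (α : ℝ)
    (h : Tendsto (fun n => cfL (List.ofFn fun i : Fin (n+1) => a i)) atTop (nhds α)) :
    |α - a 0| ≤ 2/5 ∧ α - a 0 ≠ 0 ∧
    Tendsto (fun n => cfL (List.ofFn fun i : Fin (n+1) => a (i+1))) atTop
      (nhds (α - a 0)⁻¹) := by
  set t : ℕ → ℝ := fun n => cfL (List.ofFn fun i : Fin (n+1) => a (i+1)) with htdef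
  have hx : ∀ n : ℕ, cfL (List.ofFn fun i : Fin (n+2) => a i) = (a 0 : ℝ) + (t n)⁻¹ := by
    intro n
    rw [cfL_ofFn_succ]
    simp [htdef]
  have ht_lb : ∀ n, (5:ℝ)/2 ≤ |t n| := by
    intro n
    exact cfL_lb _ (by simp [List.ofFn_eq_nil_iff]) (mem_ofFn_bound a ha _)
  have ht_ne : ∀ n, t n ≠ 0 := by
    intro n h0
    have := ht_lb n; rw [h0] at this; simp at this; linarith
  have ht_ub : ∀ n, |t n| ≤ |(a 1 : ℝ)| + 1/2 := by
    intro n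
    have : (List.ofFn fun i : Fin (n+1) => a (i+1)) =
        a 1 :: List.ofFn fun i : Fin n => a (i.succ + 1) := by
      rw [List.ofFn_succ]
      norm_num
    rw [htdef]
    simp only
    rw [this]
    exact cfL_ub _ _ (by
      intro y hy
      rcases List.mem_cons.1 hy with rfl | hy'
      · exact ha 1
      · exact mem_ofFn_bound a ha _ y hy')
  have h2 : Tendsto (fun n => cfL (List.ofFn fun i : Fin (n+2) => a i)) atTop (nhds α) := by
    have := h.comp (tendsto_add_atTop_nat 1)
    exact this
  have h3 : Tendsto (fun n => (a 0 : ℝ) + (t n)⁻¹) atTop (nhds α) := by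
    exact h2.congr (fun n => hx n)
  have h4 : Tendsto (fun n => (t n)⁻¹) atTop (nhds (α - a 0)) := by
    have := h3.sub_const ((a 0 : ℝ))
    exact this.congr (fun n => by ring)
  have h5 : Tendsto (fun n => |(t n)⁻¹|) atTop (nhds |α - a 0|) := h4.abs
  have hub : |α - a 0| ≤ 2/5 := by
    refine le_of_tendsto' h5 (fun n => ?_)
    rw [abs_inv, inv_le_comm₀ (by linarith [ht_lb n]) (by norm_num)]
    linarith [ht_lb n]
  have hA1pos : (0:ℝ) < |(a 1 : ℝ)| + 1/2 := by positivity
  have hlb : (|(a 1 : ℝ)| + 1/2)⁻¹ ≤ |α - a 0| := by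
    refine ge_of_tendsto' h5 (fun n => ?_)
    rw [abs_inv]
    exact inv_anti₀ (by linarith [ht_lb n]) (ht_ub n)
  have hne : α - a 0 ≠ 0 := by
    intro h0
    rw [h0] at hlb
    simp at hlb
    have : (0:ℝ) < (|(a 1 : ℝ)| + 1/2)⁻¹ := by positivity
    linarith
  refine ⟨hub, hne, ?_⟩
  have h6 : Tendsto (fun n => ((t n)⁻¹)⁻¹) atTop (nhds (α - a 0)⁻¹) := h4.inv₀ hne
  exact h6.congr (fun n => inv_inv (t n))

lemma head_eq (a b : ℕ → ℤ) (α : ℝ)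
    (ha : ∀ i, 3 ≤ |a i|) (hb : ∀ i, 3 ≤ |b i|)
    (hA : Tendsto (fun n => cfL (List.ofFn fun i : Fin (n+1) => a i)) atTop (nhds α))
    (hB : Tendsto (fun n => cfL (List.ofFn fun i : Fin (n+1) => b i)) atTop (nhds α)) :
    a 0 = b 0 := by
  obtain ⟨hua, -, -⟩ := head_step a ha α hA
  obtain ⟨hub, -, -⟩ := head_step b hb α hB
  have habs : |(a 0 : ℝ) - (b 0 : ℝ)| ≤ 4/5 := by
    calc |(a 0 : ℝ) - b 0| = |(α - b 0) - (α - a 0)| := by ring_nf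
      _ ≤ |α - b 0| + |α - a 0| := abs_sub _ _
      _ ≤ 4/5 := by linarith
  have h1 : |a 0 - b 0| < 1 := by
    have : |((a 0 - b 0 : ℤ) : ℝ)| < 1 := by push_cast; linarith [habs]
    exact_mod_cast this
  rw [abs_lt] at h1
  omega

lemma seq_eq : ∀ (n : ℕ) (a b : ℕ → ℤ) (α : ℝ),
    (∀ i, 3 ≤ |a i|) → (∀ i, 3 ≤ |b i|) →
    Tendsto (fun n => cfL (List.ofFn fun i : Fin (n+1) => a i)) atTop (nhds α) →
    Tendsto (fun n => cfL (List.ofFn fun i : Fin (n+1) => b i)) atTop (nhds α) →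
    a n = b n := by
  intro n
  induction n with
  | zero =>
      intro a b α ha hb hA hB
      exact head_eq a b α ha hb hA hB
  | succ n ih =>
      intro a b α ha hb hA hB
      have h0 : a 0 = b 0 := head_eq a b α ha hb hA hB
      obtain ⟨-, -, hTa⟩ := head_step a ha α hA
      obtain ⟨-, -, hTb⟩ := head_step b hb α hB
      rw [← h0] at hTb
      exact ih (fun m => a (m+1)) (fun m => b (m+1)) ((α - a 0)⁻¹)
        (fun i => ha _) (fun i => hb _) hTa hTb

/-- For each real `α` and each type `(N, k)` with `k ≥ 1`, there is at most one
periodic continued fraction expansion of `α` of type `(N, k)` with all integer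
partial quotients of absolute value `> 2`. -/
theorem stmt2 (α : ℝ) (N k : ℕ) (hk : 1 ≤ k) (c d : Fin (N + k) → ℤ)
    (hc : ∀ i, 2 < |c i|) (hd : ∀ i, 2 < |d i|)
    (hcα : Tendsto (fun n => cfL (List.ofFn fun i : Fin (n+1) => pcfSeq N k c i))
      atTop (nhds α))
    (hdα : Tendsto (fun n => cfL (List.ofFn fun i : Fin (n+1) => pcfSeq N k d i))
      atTop (nhds α)) :
    c = d := by
  have hkpos : 0 < k := hk
  have hc3 : ∀ i, 3 ≤ |c i| := fun i => by linarith [hc i]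
  have hd3 : ∀ i, 3 ≤ |d i| := fun i => by linarith [hd i]
  have ha : ∀ i, 3 ≤ |pcfSeq N k c i| := by
    intro i
    unfold pcfSeq
    split
    · exact hc3 _
    · exact hc3 _
  have hb : ∀ i, 3 ≤ |pcfSeq N k d i| := by
    intro i
    unfold pcfSeq
    split
    · exact hd3 _
    · exact hd3 _
  have key : ∀ n, pcfSeq N k c n = pcfSeq N k d n :=
    fun n => seq_eq n _ _ α ha hb hcα hdα
  funext i
  have h := key i.val
  have hlt := i.isLt
  unfold pcfSeq at h
  by_cases hi : (i : ℕ) < N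
  · simp only [dif_pos hi] at h
    simpa using h
  · simp only [dif_neg hi, dif_pos hkpos] at h
    have hmod : ((i : ℕ) - N) % k = (i : ℕ) - N := Nat.mod_eq_of_lt (by omega)
    have hsum : N + ((i : ℕ) - N) = (i : ℕ) := by omega
    simp only [hmod, hsum] at h
    simpa using h
end

section
/- (Worpitzky-type convergence for large partial quotients) Let (c_n) be a sequence of complex numbers with |c_n · c_{n+1}| ≥ 4 for all n ≥ 1. Then the continued fraction [c_1, c_2, c_3, …] converges, i.e., the sequence of convergents [c_1, …, c_n] converges in ℂ. -/
/-!
Dividing the denominators by `c 1 * ⋯ * c n` turns their recurrence into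
`B (n + 2) = B (n + 1) + a n * B n` with `a n = (c (n + 1) * c (n + 2))⁻¹`,
so `‖a n‖ ≤ 1/4`, which forces `‖B n‖ ≥ (n + 1) / 2 ^ n`. Since also
`‖c 1 ⋯ c n‖ * ‖c 1 ⋯ c (n + 1)‖ ≥ ‖c 1‖ * 4 ^ n`, we get
`‖q (n + 1) * q (n + 2)‖ ≥ ‖c 1‖ (n + 1) (n + 2) / 2`. Consecutive convergents differ by
`1 / (q (n + 1) * q (n + 2))` in norm, so the convergents form a Cauchy sequence.
-/

open Filter Topology

/-- Numerators of the convergents: `p 0 = 1`, `p 1 = c 0`,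
`p (n+2) = c (n+1) * p (n+1) + p n` (partial quotients `c 0, c 1, …`). -/
def cnum (c : ℕ → ℂ) : ℕ → ℂ
  | 0 => 1
  | 1 => c 0
  | (n+2) => c (n+1) * cnum c (n+1) + cnum c n

/-- Denominators of the convergents: `q 0 = 0`, `q 1 = 1`,
`q (n+2) = c (n+1) * q (n+1) + q n`. -/
def cden (c : ℕ → ℂ) : ℕ → ℂ
  | 0 => 0
  | 1 => 1
  | (n+2) => c (n+1) * cden c (n+1) + cden c n

open Finset

section Recurrence

variable {R : Type*} [SeminormedRing R] [NormOneClass R]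

theorem one_div_two_pow_succ_le_norm_succ_sub_half {B a : ℕ → R} (h0 : B 0 = 1) (h1 : B 1 = 1)
    (hrec : ∀ n, B (n + 2) = B (n + 1) + a n * B n) (ha : ∀ n, ‖a n‖ ≤ 1 / 4) (n : ℕ) :
    1 / 2 ^ (n + 1) ≤ ‖B (n + 1)‖ - ‖B n‖ / 2 := by
  induction n with
  | zero => norm_num [h0, h1]
  | succ n ih =>
    have hB : ‖B (n + 1)‖ ≤ ‖B (n + 2)‖ + ‖B n‖ / 4 :=
      calc ‖B (n + 1)‖ = ‖B (n + 2) - a n * B n‖ := by rw [hrec, add_sub_cancel_right]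
        _ ≤ ‖B (n + 2)‖ + ‖a n‖ * ‖B n‖ :=
          (norm_sub_le _ _).trans (by gcongr; exact norm_mul_le _ _)
        _ ≤ ‖B (n + 2)‖ + ‖B n‖ / 4 := by
          linarith [mul_le_mul_of_nonneg_right (ha n) (norm_nonneg (B n))]
    have h2 : (1 : ℝ) / 2 ^ (n + 2) = 1 / 2 ^ (n + 1) / 2 := by ring
    linarith

/-- Sharp: equality holds for `a ≡ -1/4`. -/
theorem succ_div_two_pow_le_norm {B a : ℕ → R} (h0 : B 0 = 1) (h1 : B 1 = 1)
    (hrec : ∀ n, B (n + 2) = B (n + 1) + a n * B n) (ha : ∀ n, ‖a n‖ ≤ 1 / 4) (n : ℕ) :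
    (n + 1) / 2 ^ n ≤ ‖B n‖ := by
  induction n with
  | zero => simp [h0]
  | succ n ih =>
    have := one_div_two_pow_succ_le_norm_succ_sub_half h0 h1 hrec ha n
    have h2 : ((n + 1 : ℕ) + 1 : ℝ) / 2 ^ (n + 1) = (n + 1) / 2 ^ n / 2 + 1 / 2 ^ (n + 1) := by
      push_cast; ring
    linarith

end Recurrence

theorem cnum_mul_cden_sub_cnum_mul_cden (c : ℕ → ℂ) (n : ℕ) :
    cnum c (n + 1) * cden c n - cnum c n * cden c (n + 1) = (-1) ^ (n + 1) := by
  induction n with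
  | zero => simp [cnum, cden]
  | succ n ih =>
    rw [cnum, cden, pow_succ]
    linear_combination -ih

theorem norm_convergent_sub_convergent_succ (c : ℕ → ℂ) {n : ℕ} (hq : cden c (n + 1) ≠ 0)
    (hq' : cden c (n + 2) ≠ 0) :
    ‖cnum c (n + 1) / cden c (n + 1) - cnum c (n + 2) / cden c (n + 2)‖ =
      1 / ‖cden c (n + 1) * cden c (n + 2)‖ := by
  rw [div_sub_div _ _ hq hq', norm_div, ← neg_sub, mul_comm (cden c (n + 1)),
    cnum_mul_cden_sub_cnum_mul_cden]
  simp

noncomputable def cprod (c : ℕ → ℂ) (n : ℕ) : ℂ := ∏ k ∈ range n, c (k + 1)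

theorem cprod_mul_cprod_succ (c : ℕ → ℂ) (n : ℕ) :
    cprod c n * cprod c (n + 1) = c 1 * ∏ k ∈ range n, (c (k + 1) * c (k + 2)) := by
  induction n with
  | zero => simp [cprod]
  | succ n ih =>
    simp only [cprod, prod_range_succ] at ih ⊢
    linear_combination (c (n + 1) * c (n + 2)) * ih

theorem cden_succ_div_cprod_rec (c : ℕ → ℂ) (hc : ∀ n, c (n + 1) ≠ 0) (n : ℕ) :
    cden c (n + 3) / cprod c (n + 2) =
      cden c (n + 2) / cprod c (n + 1) +
        (c (n + 1) * c (n + 2))⁻¹ * (cden c (n + 1) / cprod c n) := by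
  have hP : cprod c n ≠ 0 := prod_ne_zero_iff.2 fun k _ => hc k
  simp only [cprod, prod_range_succ] at hP ⊢
  rw [cden]
  field_simp [hc n, hc (n + 1)]

theorem ne_zero_of_four_le_norm_mul {c : ℕ → ℂ} (h : ∀ n, 4 ≤ ‖c n * c (n + 1)‖)
    (n : ℕ) : c n ≠ 0 := fun hn => by
  have := h n
  norm_num [hn] at this

theorem succ_div_two_pow_le_norm_cden_div_cprod {c : ℕ → ℂ}
    (h : ∀ n, 4 ≤ ‖c n * c (n + 1)‖) (n : ℕ) :
    (n + 1) / 2 ^ n ≤ ‖cden c (n + 1) / cprod c n‖ := by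
  have hc := ne_zero_of_four_le_norm_mul h
  refine succ_div_two_pow_le_norm (B := fun n => cden c (n + 1) / cprod c n)
    (a := fun n => (c (n + 1) * c (n + 2))⁻¹) (by simp [cden, cprod])
    (by simp [cden, cprod, hc 1]) (cden_succ_div_cprod_rec c fun n => hc (n + 1))
    (fun n => ?_) n
  simpa [norm_inv] using inv_anti₀ (by norm_num) (h (n + 1))

theorem norm_mul_four_pow_le_norm_cprod_mul {c : ℕ → ℂ}
    (h : ∀ n, 4 ≤ ‖c n * c (n + 1)‖) (n : ℕ) :
    ‖c 1‖ * 4 ^ n ≤ ‖cprod c n * cprod c (n + 1)‖ := by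
  rw [cprod_mul_cprod_succ, norm_mul, norm_prod]
  gcongr
  calc (4 : ℝ) ^ n = ∏ _ ∈ range n, 4 := by simp
    _ ≤ _ := prod_le_prod (fun _ _ => by norm_num) fun k _ => by simpa using h (k + 1)

theorem le_norm_cden_mul_cden_succ {c : ℕ → ℂ} (h : ∀ n, 4 ≤ ‖c n * c (n + 1)‖)
    (n : ℕ) : (n + 1) * (n + 2) * ‖c 1‖ / 2 ≤ ‖cden c (n + 1) * cden c (n + 2)‖ := by
  have hP : ∀ n, cprod c n ≠ 0 := fun n =>
    prod_ne_zero_iff.2 fun k _ => ne_zero_of_four_le_norm_mul h (k + 1)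
  have hB := succ_div_two_pow_le_norm_cden_div_cprod h
  have hB' := hB (n + 1)
  push_cast at hB'
  have hsplit : cden c (n + 1) * cden c (n + 2) = cden c (n + 1) / cprod c n *
      (cden c (n + 2) / cprod c (n + 1)) * (cprod c n * cprod c (n + 1)) := by
    field_simp [hP n, hP (n + 1)]
  calc (n + 1) * (n + 2) * ‖c 1‖ / 2
      = (n + 1) / 2 ^ n * ((n + 1 + 1) / 2 ^ (n + 1)) * (‖c 1‖ * 4 ^ n) := by
        rw [show (4 : ℝ) ^ n = 2 ^ n * 2 ^ n by rw [← mul_pow]; norm_num]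
        field_simp
        ring
    _ ≤ ‖cden c (n + 1) / cprod c n‖ * ‖cden c (n + 2) / cprod c (n + 1)‖ *
        ‖cprod c n * cprod c (n + 1)‖ := by
        gcongr
        exacts [hB n, norm_mul_four_pow_le_norm_cprod_mul h n]
    _ = ‖cden c (n + 1) * cden c (n + 2)‖ := by simp only [hsplit, norm_mul]

/-- Worpitzky-type convergence: if `|c n * c (n+1)| ≥ 4` for all `n`, then the
continued fraction `[c 0, c 1, …]` converges, i.e. the sequence of convergents
`p n / q n` has a limit in `ℂ`. -/
theorem stmt3 (c : ℕ → ℂ) (h : ∀ n, 4 ≤ ‖c n * c (n+1)‖) :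
    ∃ L : ℂ, Tendsto (fun n => cnum c (n+1) / cden c (n+1)) atTop (nhds L) := by
  have hc1 : 0 < ‖c 1‖ := norm_pos_iff.2 (ne_zero_of_four_le_norm_mul h 1)
  have hq : ∀ n, cden c (n + 1) ≠ 0 ∧ cden c (n + 2) ≠ 0 := fun n =>
    mul_ne_zero_iff.1 <| norm_pos_iff.1 <|
      lt_of_lt_of_le (by positivity) (le_norm_cden_mul_cden_succ h n)
  have hdist : ∀ n : ℕ,
      dist (cnum c (n + 1) / cden c (n + 1)) (cnum c (n + 2) / cden c (n + 2)) ≤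
        2 / ‖c 1‖ * (1 / ((n : ℝ) + 1) ^ 2) := fun n =>
    calc _ = 1 / ‖cden c (n + 1) * cden c (n + 2)‖ := by
          rw [dist_eq_norm, norm_convergent_sub_convergent_succ c (hq n).1 (hq n).2]
      _ ≤ 1 / ((n + 1) * (n + 2) * ‖c 1‖ / 2) :=
          one_div_le_one_div_of_le (by positivity) (le_norm_cden_mul_cden_succ h n)
      _ ≤ 2 / ‖c 1‖ * (1 / ((n : ℝ) + 1) ^ 2) := by
          rw [div_le_iff₀ (by positivity)]
          field_simp
          nlinarith
  have hsum : Summable fun n : ℕ => 2 / ‖c 1‖ * (1 / ((n : ℝ) + 1) ^ 2) := .mul_left _ <| by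
    exact_mod_cast (summable_nat_add_iff 1).2 (Real.summable_one_div_nat_pow.2 one_lt_two)
  exact cauchySeq_tendsto_of_complete (cauchySeq_of_dist_le_of_summable _ hdist hsum)
end

section
/- Let R be an integral domain with fraction field K, let β ∉ K lie in a quadratic extension K(β) of K with nontrivial K-automorphism σ, and set β* = σ(β). Then the orders R_β and R_{β*} of the lattices L_β = Rβ + R and L_{β*} = Rβ* + R coincide: R_β = R_{β*}. -/
/-- Key one-sided inclusion for orders of quadratic lattices. -/
lemma key12 {R K L : Type} [CommRing R] [IsDomain R] [Field K] [Field L]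
    [Algebra R K] [IsFractionRing R K] [Algebra K L] [Algebra R L]
    [IsScalarTower R K L]
    (β γ : L) (t n : K)
    (hsum : β + γ = algebraMap K L t)
    (hn : β * γ = algebraMap K L n)
    (hindep : ∀ a b : K, a • β + b • (1 : L) = 0 → a = 0 ∧ b = 0)
    (x : L)
    (hx : ∀ y ∈ Submodule.span R ({β, 1} : Set L),
        x * y ∈ Submodule.span R ({β, 1} : Set L)) :
    ∀ y ∈ Submodule.span R ({γ, 1} : Set L),
        x * y ∈ Submodule.span R ({γ, 1} : Set L) := by
  have htow : ∀ r : R, algebraMap R L r = algebraMap K L (algebraMap R K r) := by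
    intro r; rw [IsScalarTower.algebraMap_apply R K L]
  -- x ∈ span {β, 1}
  have h1 : (1 : L) ∈ Submodule.span R ({β, 1} : Set L) :=
    Submodule.mem_span_pair.mpr ⟨0, 1, by simp⟩
  have hβmem : β ∈ Submodule.span R ({β, 1} : Set L) :=
    Submodule.mem_span_pair.mpr ⟨1, 0, by simp⟩
  obtain ⟨a, b, hab⟩ := Submodule.mem_span_pair.mp (by simpa using hx 1 h1)
  obtain ⟨p, q, hpq⟩ := Submodule.mem_span_pair.mp (hx β hβmem)
  -- rewrite with algebraMap
  have hab' : algebraMap R L a * β + algebraMap R L b = x := by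
    simpa [Algebra.smul_def] using hab
  have hpq' : algebraMap R L p * β + algebraMap R L q = x * β := by
    simpa [Algebra.smul_def] using hpq
  -- β² = t β - n
  have hβ2 : β * β = algebraMap K L t * β - algebraMap K L n := by
    have : γ = algebraMap K L t - β := by linear_combination hsum
    rw [this] at hn; linear_combination -hn
  -- extract coefficient identities in K
  have hcoef : (algebraMap R K p - algebraMap R K a * t - algebraMap R K b) = 0 ∧
      (algebraMap R K q + algebraMap R K a * n) = 0 := by
    apply hindep
    simp only [Algebra.smul_def, map_sub, map_add, map_mul, mul_one, ← htow]
    linear_combination hpq' - hab' * β + algebraMap R L a * hβ2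
  obtain ⟨hc1, hc2⟩ := hcoef
  -- lift to L
  have hc1' : algebraMap R L p = algebraMap R L a * algebraMap K L t + algebraMap R L b := by
    have := congrArg (algebraMap K L) hc1
    simp only [map_sub, map_add, map_mul, map_zero, ← htow] at this
    linear_combination this
  have hc2' : algebraMap R L q = - (algebraMap R L a * algebraMap K L n) := by
    have := congrArg (algebraMap K L) hc2
    simp only [map_add, map_mul, map_zero, map_neg, ← htow] at this
    linear_combination this
  -- x ∈ span {γ, 1}
  have hxmem : x ∈ Submodule.span R ({γ, 1} : Set L) := by
    apply Submodule.mem_span_pair.mpr ⟨-a, p, ?_⟩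
    simp only [Algebra.smul_def, map_neg, mul_one]
    linear_combination hab' - algebraMap R L a * hsum + hc1'
  -- x * γ ∈ span {γ, 1}
  have hxγmem : x * γ ∈ Submodule.span R ({γ, 1} : Set L) := by
    apply Submodule.mem_span_pair.mpr ⟨b, -q, ?_⟩
    simp only [Algebra.smul_def, map_neg, mul_one]
    linear_combination γ * hab' - algebraMap R L a * hn - hc2'
  intro y hy
  obtain ⟨m, k, hmk⟩ := Submodule.mem_span_pair.mp hy
  have : x * y = m • (x * γ) + k • x := by
    rw [← hmk]; simp [Algebra.smul_def]; ring
  rw [this]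
  exact Submodule.add_mem _ (Submodule.smul_mem _ _ hxγmem) (Submodule.smul_mem _ _ hxmem)

/-- Let `R` be a domain with fraction field `K`, `β ∉ K` in a quadratic
extension `L = K(β)` with nontrivial `K`-automorphism `σ`, and `β* = σ β`.
Then the orders of the lattices `L_β = Rβ + R` and `L_{β*} = Rβ* + R`
coincide. -/
theorem stmt12 (R K L : Type) [CommRing R] [IsDomain R] [Field K] [Field L]
    [Algebra R K] [IsFractionRing R K] [Algebra K L] [Algebra R L]
    [IsScalarTower R K L]
    (hdim : Module.finrank K L = 2)
    (β : L) (hβ : β ∉ Set.range (algebraMap K L))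
    (σ : L ≃ₐ[K] L) (hσ : σ ≠ AlgEquiv.refl) :
    {x : L | ∀ y ∈ Submodule.span R ({β, 1} : Set L),
        x * y ∈ Submodule.span R ({β, 1} : Set L)}
      = {x : L | ∀ y ∈ Submodule.span R ({σ β, 1} : Set L),
        x * y ∈ Submodule.span R ({σ β, 1} : Set L)} := by
  -- linear independence of {γ, 1} for any γ not in K
  have hind : ∀ γ : L, γ ∉ Set.range (algebraMap K L) →
      ∀ a b : K, a • γ + b • (1 : L) = 0 → a = 0 ∧ b = 0 := by
    intro γ hγ a b hab
    by_cases ha : a = 0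
    · subst ha
      simp only [Algebra.smul_def, map_zero, zero_mul, zero_add, mul_one] at hab
      exact ⟨rfl, (algebraMap K L).injective (by simp [hab])⟩
    · refine absurd ⟨-b/a, ?_⟩ hγ
      have h1 : a • γ = -(b • (1 : L)) := eq_neg_of_add_eq_zero_left hab
      rw [Algebra.algebraMap_eq_smul_one, div_eq_inv_mul, mul_smul, neg_smul, ← h1,
        inv_smul_smul₀ ha]
  have hli : LinearIndependent K ![β, 1] := by
    rw [LinearIndependent.pair_iff]
    intro s t h
    exact hind β hβ s t h
  have hcard : Fintype.card (Fin 2) = Module.finrank K L := by simp [hdim]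
  have hspan : Submodule.span K ({β, 1} : Set L) = ⊤ := by
    have hb := (basisOfLinearIndependentOfCardEqFinrank hli hcard).span_eq
    rw [coe_basisOfLinearIndependentOfCardEqFinrank] at hb
    rw [← hb]
    congr 1
    simp only [Matrix.range_cons, Matrix.range_empty, Set.union_empty,
      Set.union_singleton]
    exact Set.pair_comm β 1
  have hrep : ∀ x : L, ∃ u v : K, u • β + v • (1 : L) = x := by
    intro x
    exact Submodule.mem_span_pair.mp (by rw [hspan]; trivial)
  obtain ⟨c, d, hcd⟩ := hrep (β * β)
  have hcd1 : β * β = algebraMap K L c * β + algebraMap K L d := by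
    rw [← hcd]; simp [Algebra.smul_def]
  have hne : σ β ≠ β := by
    intro h
    apply hσ
    ext x
    obtain ⟨u, v, huv⟩ := hrep x
    rw [← huv]
    simp [map_add, map_smul, h]
  have hcd2 : σ β * σ β = algebraMap K L c * σ β + algebraMap K L d := by
    have := congrArg σ hcd1
    simpa [map_add, map_mul, AlgEquiv.commutes] using this
  have hsum : β + σ β = algebraMap K L c := by
    have h0 : (β - σ β) * (β + σ β - algebraMap K L c) = 0 := by
      linear_combination hcd1 - hcd2
    rcases mul_eq_zero.mp h0 with h | h
    · exact absurd (sub_eq_zero.mp h).symm hne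
    · linear_combination h
  have hn : β * σ β = algebraMap K L (-d) := by
    have : σ β = algebraMap K L c - β := by linear_combination hsum
    rw [this, map_neg]
    linear_combination -hcd1
  have hγK : σ β ∉ Set.range (algebraMap K L) := by
    rintro ⟨k, hk⟩
    exact hβ ⟨c - k, by rw [map_sub, hk]; linear_combination -hsum⟩
  ext x
  simp only [Set.mem_setOf_eq]
  constructor
  · exact key12 β (σ β) c (-d) hsum hn (hind β hβ) x
  · exact key12 (σ β) β c (-d) (by rw [add_comm]; exact hsum)
      (by rw [mul_comm]; exact hn) (hind (σ β) hγK) x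
end

section
/- Let R be an integral domain with fraction field K, and let β ∉ K ∪ {∞} be a root of Ax² + Bx + C ∈ R[x] with A ≠ 0 and conjugate root β*. For each integer k, there is a bijection between the set of matrices [[a, b], [c, d]] ∈ M_2(R) satisfying ad - bc = (-1)^k, Bc = A(d - a), -Ab = Cc, -Bb = C(d - a), and the set of units u of the order R_β = {x ∈ K(β) : x(Rβ + R) ⊆ Rβ + R} with Norm_{K(β)/K}(u) = (-1)^k. The bijection sends [[a, b], [c, d]] to u = cβ + d. -/
/-!
A matrix `[[a, b], [c, d]]` is the matrix of multiplication by `u = cβ + d` on the `R`-basis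
`(β, 1)` of `Rβ + R`: using `Aβ² + Bβ + C = 0`, the three linear relations say exactly that
`uβ = aβ + b`. Since `A(β + σβ) = -B`, the second relation gives `σu = a - cβ`, whence
`u σu = ad - bc`. So the determinant is the norm, and `(-1)^k σu`, whose matrix is
`(-1)^k` times the adjugate, is an inverse of `u` in the order.
-/

open Submodule

section SpanPairOne

variable {R L : Type*} [CommRing R] [CommRing L] [Algebra R L] {β : L}

theorem mem_span_pair_one_iff {x : L} :
    x ∈ span R ({β, 1} : Set L) ↔
      ∃ c d : R, algebraMap R L c * β + algebraMap R L d = x := by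
  simp only [mem_span_pair, Algebra.smul_def, mul_one]

theorem forall_mul_mem_span_pair_one_iff {u : L} :
    (∀ y ∈ span R ({β, 1} : Set L), u * y ∈ span R ({β, 1} : Set L)) ↔
      ∃ a b c d : R, algebraMap R L c * β + algebraMap R L d = u ∧
        u * β = algebraMap R L a * β + algebraMap R L b := by
  constructor
  · intro h
    obtain ⟨c, d, hu⟩ := mem_span_pair_one_iff.mp (by simpa using h 1 (subset_span (by simp)))
    obtain ⟨a, b, huβ⟩ := mem_span_pair_one_iff.mp (h β (subset_span (by simp)))
    exact ⟨a, b, c, d, hu, huβ.symm⟩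
  · rintro ⟨a, b, c, d, hu, huβ⟩ y hy
    obtain ⟨p, q, rfl⟩ := mem_span_pair.mp hy
    have hu_mem : u ∈ span R ({β, 1} : Set L) := mem_span_pair_one_iff.mpr ⟨c, d, hu⟩
    have huβ_mem : u * β ∈ span R ({β, 1} : Set L) := mem_span_pair_one_iff.mpr ⟨a, b, huβ.symm⟩
    rw [mul_add, mul_smul_comm, mul_smul_comm, mul_one]
    exact add_mem (smul_mem _ _ huβ_mem) (smul_mem _ _ hu_mem)

theorem LinearIndependent.eq_of_algebraMap_mul_add_eq (hind : LinearIndependent R ![β, 1])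
    {p q p' q' : R}
    (h : algebraMap R L p * β + algebraMap R L q = algebraMap R L p' * β + algebraMap R L q') :
    p = p' ∧ q = q' :=
  hind.eq_of_pair (by simpa only [Algebra.smul_def, mul_one] using h)

variable {a b c d : R}

theorem mul_sub_eq_det_of_mul_eq
    (h : (algebraMap R L c * β + algebraMap R L d) * β = algebraMap R L a * β + algebraMap R L b) :
    (algebraMap R L c * β + algebraMap R L d) * (algebraMap R L a - algebraMap R L c * β) =
      algebraMap R L (a * d - b * c) := by
  simp only [map_sub, map_mul]
  linear_combination (-algebraMap R L c) * h

theorem sub_mul_eq_of_mul_eq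
    (h : (algebraMap R L c * β + algebraMap R L d) * β = algebraMap R L a * β + algebraMap R L b) :
    (algebraMap R L a - algebraMap R L c * β) * β = algebraMap R L d * β - algebraMap R L b := by
  linear_combination -h

end SpanPairOne

section QuadraticRoot

variable {R L : Type*} [CommRing R] [Field L] [Algebra R L] {β : L} {A B C : R}

theorem algebraMap_injective_of_linearIndependent_pair_one
    (hind : LinearIndependent R ![β, 1]) : Function.Injective (algebraMap R L) := by
  refine (injective_iff_map_eq_zero _).mpr fun p hp => ?_
  exact (LinearIndependent.pair_iff.mp hind 0 p (by simp [Algebra.smul_def, hp])).2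

theorem mul_eq_iff_fermatPell (hind : LinearIndependent R ![β, 1]) (hA : A ≠ 0)
    (hroot : algebraMap R L A * β ^ 2 + algebraMap R L B * β + algebraMap R L C = 0)
    {a b c d : R} :
    (algebraMap R L c * β + algebraMap R L d) * β = algebraMap R L a * β + algebraMap R L b ↔
      B * c = A * (d - a) ∧ -(A * b) = C * c ∧ -(B * b) = C * (d - a) := by
  have hinj := algebraMap_injective_of_linearIndependent_pair_one hind
  have hA' : algebraMap R L A ≠ 0 := (map_ne_zero_iff _ hinj).mpr hA
  constructor
  · intro h
    obtain ⟨h₁, h₂⟩ := hind.eq_of_algebraMap_mul_add_eq (p := A * d - B * c) (q := -(C * c))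
      (p' := A * a) (q' := A * b) (by
        simp only [map_sub, map_mul, map_neg]
        linear_combination algebraMap R L A * h - algebraMap R L c * hroot)
    -- `A` times the third relation is a combination of the first two.
    refine ⟨by linear_combination -h₁, by linear_combination h₂, hinj (mul_left_cancel₀ hA' ?_)⟩
    simp only [← map_mul]
    congr 1
    linear_combination B * h₂ - C * h₁
  · rintro ⟨h₁, h₂, -⟩
    have e₁ := congrArg (algebraMap R L) h₁
    have e₂ := congrArg (algebraMap R L) h₂
    simp only [map_mul, map_sub, map_neg] at e₁ e₂
    apply mul_left_cancel₀ hA'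
    linear_combination algebraMap R L c * hroot - β * e₁ + e₂

theorem algebraMap_mul_add_conj (σ : L ≃ₐ[R] L) (hσβ : σ β ≠ β)
    (hroot : algebraMap R L A * β ^ 2 + algebraMap R L B * β + algebraMap R L C = 0) :
    algebraMap R L A * (β + σ β) = -algebraMap R L B := by
  have hσroot : algebraMap R L A * σ β ^ 2 + algebraMap R L B * σ β + algebraMap R L C = 0 := by
    simpa only [map_add, map_mul, map_pow, map_zero, AlgEquiv.commutes] using congrArg σ hroot
  have h : (β - σ β) * (algebraMap R L A * (β + σ β) + algebraMap R L B) = 0 := by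
    linear_combination hroot - hσroot
  rcases mul_eq_zero.mp h with h | h
  · exact absurd (sub_eq_zero.mp h).symm hσβ
  · linear_combination h

theorem conj_eq_of_fermatPell (σ : L ≃ₐ[R] L) (hσβ : σ β ≠ β)
    (hroot : algebraMap R L A * β ^ 2 + algebraMap R L B * β + algebraMap R L C = 0)
    (hA : algebraMap R L A ≠ 0) {a c d : R} (h : B * c = A * (d - a)) :
    σ (algebraMap R L c * β + algebraMap R L d) = algebraMap R L a - algebraMap R L c * β := by
  have e := congrArg (algebraMap R L) h
  simp only [map_mul, map_sub] at e
  rw [map_add, map_mul, AlgEquiv.commutes, AlgEquiv.commutes]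
  apply mul_left_cancel₀ hA
  linear_combination algebraMap R L c * algebraMap_mul_add_conj σ hσβ hroot - e

end QuadraticRoot

theorem linearIndependent_pair_one_of_notMem_range {R K L : Type*} [CommRing R] [Field K]
    [Field L] [Algebra R K] [FaithfulSMul R K] [Algebra K L] [Algebra R L] [IsScalarTower R K L]
    {β : L} (hβ : β ∉ Set.range (algebraMap K L)) : LinearIndependent R ![β, 1] := by
  refine LinearIndependent.restrict_scalars' (K := K) R ?_
  rw [LinearIndependent.pair_symm_iff, LinearIndependent.pair_iff' one_ne_zero]
  exact fun a ha => hβ ⟨a, by rw [Algebra.algebraMap_eq_smul_one, ha]⟩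

theorem stmt13_general (R K L : Type) [CommRing R] [Field K] [Field L]
    [Algebra R K] [IsFractionRing R K] [Algebra K L] [Algebra R L]
    [IsScalarTower R K L]
    (β : L) (hβ : β ∉ Set.range (algebraMap K L))
    (A B C : R) (hA : A ≠ 0)
    (hroot : algebraMap R L A * β ^ 2 + algebraMap R L B * β + algebraMap R L C = 0)
    (σ : L ≃ₐ[K] L) (hσβ : σ β ≠ β)
    (k : ℕ) :
    Set.BijOn
      (fun m : Matrix (Fin 2) (Fin 2) R =>
        algebraMap R L (m 1 0) * β + algebraMap R L (m 1 1))
      {m : Matrix (Fin 2) (Fin 2) R |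
        m 0 0 * m 1 1 - m 0 1 * m 1 0 = (-1) ^ k ∧
        B * m 1 0 = A * (m 1 1 - m 0 0) ∧
        -(A * m 0 1) = C * m 1 0 ∧
        -(B * m 0 1) = C * (m 1 1 - m 0 0)}
      {u : L |
        (∀ y ∈ Submodule.span R ({β, 1} : Set L),
          u * y ∈ Submodule.span R ({β, 1} : Set L)) ∧
        (∃ v : L, (∀ y ∈ Submodule.span R ({β, 1} : Set L),
          v * y ∈ Submodule.span R ({β, 1} : Set L)) ∧ u * v = 1) ∧
        u * σ u = algebraMap R L ((-1) ^ k)} := by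
  have hind := linearIndependent_pair_one_of_notMem_range (R := R) hβ
  have hinj := algebraMap_injective_of_linearIndependent_pair_one hind
  have hA' : algebraMap R L A ≠ 0 := (map_ne_zero_iff _ hinj).mpr hA
  set f := algebraMap R L
  have hconj {a c d : R} (h : B * c = A * (d - a)) : σ (f c * β + f d) = f a - f c * β :=
    conj_eq_of_fermatPell (σ.restrictScalars R) hσβ hroot hA' h
  set ε : R := (-1) ^ k
  refine ⟨?_, ?_, ?_⟩
  · rintro m ⟨hdet, hrel⟩
    have hmul := (mul_eq_iff_fermatPell hind hA hroot).mpr hrel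
    have hnorm := mul_sub_eq_det_of_mul_eq hmul
    rw [hdet] at hnorm
    refine ⟨forall_mul_mem_span_pair_one_iff.mpr ⟨_, _, _, _, rfl, hmul⟩,
      ⟨f ε * (f (m 0 0) - f (m 1 0) * β), forall_mul_mem_span_pair_one_iff.mpr
        ⟨ε * m 1 1, -(ε * m 0 1), -(ε * m 1 0), ε * m 0 0, ?_, ?_⟩, ?_⟩, ?_⟩
    · simp only [map_neg, map_mul]; ring
    · simp only [map_neg, map_mul]
      linear_combination f ε * sub_mul_eq_of_mul_eq hmul
    · rw [mul_left_comm, hnorm, ← map_mul, ← mul_pow]; norm_num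
    · rw [hconj hrel.1]
      exact hnorm
  · rintro m ⟨-, hrel⟩ m' ⟨-, hrel'⟩ h
    obtain ⟨hc, hd⟩ := hind.eq_of_algebraMap_mul_add_eq h
    have hmul := (mul_eq_iff_fermatPell hind hA hroot).mpr hrel
    have hmul' := (mul_eq_iff_fermatPell hind hA hroot).mpr hrel'
    rw [← hc, ← hd, hmul] at hmul'
    obtain ⟨ha, hb⟩ := hind.eq_of_algebraMap_mul_add_eq hmul'
    ext i j
    fin_cases i <;> fin_cases j
    exacts [ha, hb, hc, hd]
  · rintro u ⟨hstab, -, hnorm⟩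
    obtain ⟨a, b, c, d, rfl, hmul⟩ := forall_mul_mem_span_pair_one_iff.mp hstab
    have hrel := (mul_eq_iff_fermatPell hind hA hroot).mp hmul
    have hdet : a * d - b * c = ε := by
      refine hinj ?_
      rw [← mul_sub_eq_det_of_mul_eq hmul, ← hconj hrel.1]
      exact hnorm
    exact ⟨!![a, b; c, d], ⟨hdet, hrel⟩, rfl⟩

/-- There is a bijection between the `R`-points of the Fermat–Pell curve
`FP_k(ℬ)` (matrices `[[a,b],[c,d]]` over `R` with `ad - bc = (-1)^k`,
`Bc = A(d - a)`, `-Ab = Cc`, `-Bb = C(d - a)`) and the units `u` of the order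
`R_β` of `L_β = Rβ + R` with `Norm_{K(β)/K}(u) = (-1)^k`, sending
`[[a,b],[c,d]]` to `u = cβ + d`. -/
theorem stmt13 (R K L : Type) [CommRing R] [IsDomain R] [Field K] [Field L]
    [Algebra R K] [IsFractionRing R K] [Algebra K L] [Algebra R L]
    [IsScalarTower R K L]
    (hdim : Module.finrank K L = 2)
    (β : L) (hβ : β ∉ Set.range (algebraMap K L))
    (A B C : R) (hA : A ≠ 0)
    (hroot : algebraMap R L A * β ^ 2 + algebraMap R L B * β + algebraMap R L C = 0)
    (σ : L ≃ₐ[K] L) (hσβ : σ β ≠ β)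
    (k : ℕ) :
    Set.BijOn
      (fun m : Matrix (Fin 2) (Fin 2) R =>
        algebraMap R L (m 1 0) * β + algebraMap R L (m 1 1))
      {m : Matrix (Fin 2) (Fin 2) R |
        m 0 0 * m 1 1 - m 0 1 * m 1 0 = (-1) ^ k ∧
        B * m 1 0 = A * (m 1 1 - m 0 0) ∧
        -(A * m 0 1) = C * m 1 0 ∧
        -(B * m 0 1) = C * (m 1 1 - m 0 0)}
      {u : L |
        (∀ y ∈ Submodule.span R ({β, 1} : Set L),
          u * y ∈ Submodule.span R ({β, 1} : Set L)) ∧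
        (∃ v : L, (∀ y ∈ Submodule.span R ({β, 1} : Set L),
          v * y ∈ Submodule.span R ({β, 1} : Set L)) ∧ u * v = 1) ∧
        u * σ u = algebraMap R L ((-1) ^ k)} :=
  stmt13_general R K L β hβ A B C hA hroot σ hσβ k
end

section
/- Let R be a commutative ring and A ∈ SL_2(R). For integers k ≥ 1, a tuple (b_1, a_1, …, a_k) ∈ R^{k+1} satisfies A = D(b_1) D(a_1) ⋯ D(a_k) t D(-b_1) t^{k+1} if and only if (b_1, a_1, …, a_{k-1}, a_k - b_1) satisfies A = D(x_1) D(x_2) ⋯ D(x_{k+1}) t^{k+1}; hence the solution sets V̄_{1,k}(A)(R) and V̄_{k+1}(A)(R) are in natural bijection via an invertible linear change of coordinates over R. -/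
/-- The matrix `D(x) = [[x, 1], [1, 0]]`. -/
def Dm {R : Type} [CommRing R] (x : R) : Matrix (Fin 2) (Fin 2) R :=
  !![x, 1; 1, 0]

/-- The matrix `t = [[0, 1], [1, 0]]`. -/
def tm {R : Type} [CommRing R] : Matrix (Fin 2) (Fin 2) R :=
  !![0, 1; 1, 0]

/-- The ordered product `D(x 0) ⋯ D(x (n-1))`. -/
def Dlist {R : Type} [CommRing R] {n : ℕ} (x : Fin n → R) : Matrix (Fin 2) (Fin 2) R :=
  (List.ofFn fun i => Dm (x i)).prod

/-- The invertible linear change of coordinates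
`(b₁, a₁, …, a_k) ↦ (b₁, a₁, …, a_{k-1}, a_k - b₁)`. -/
def shiftMap {R : Type} [CommRing R] (k : ℕ) (p : R × (Fin k → R)) (i : Fin (k + 1)) : R :=
  if h0 : (i : ℕ) = 0 then p.1
  else if hk : (i : ℕ) = k then p.2 ⟨k - 1, by omega⟩ - p.1
  else p.2 ⟨(i : ℕ) - 1, by have := i.isLt; omega⟩

variable {R : Type} [CommRing R]

lemma sm0 {k : ℕ} (p : R × (Fin k → R)) (j : Fin (k+1)) (hj : (j : ℕ) = 0) :
    shiftMap k p j = p.1 := by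
  rw [shiftMap, dif_pos hj]

lemma smk {k : ℕ} (hk : 1 ≤ k) (p : R × (Fin k → R)) (j : Fin (k+1))
    (hj : (j : ℕ) = k) : shiftMap k p j = p.2 ⟨k - 1, by omega⟩ - p.1 := by
  rw [shiftMap, dif_neg (by omega), dif_pos hj]

lemma smmid {k : ℕ} (p : R × (Fin k → R)) (j : Fin (k+1)) (h0 : (j : ℕ) ≠ 0)
    (hjk : (j : ℕ) ≠ k) :
    shiftMap k p j = p.2 ⟨(j : ℕ) - 1, by have := j.isLt; omega⟩ := by
  rw [shiftMap, dif_neg h0, dif_neg hjk]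

lemma DtD (a b : R) : Dm a * tm * Dm (-b) = Dm (a - b) := by
  ext i j
  fin_cases i <;> fin_cases j <;>
    simp [Dm, tm, Matrix.mul_apply, Fin.sum_univ_two] <;> ring

lemma Dlist_succ {n : ℕ} (x : Fin (n+1) → R) :
    Dlist x = Dm (x 0) * Dlist (fun i => x i.succ) := by
  rw [Dlist, List.ofFn_succ, List.prod_cons]; rfl

lemma Dlist_succ' {n : ℕ} (x : Fin (n+1) → R) :
    Dlist x = Dlist (fun i : Fin n => x i.castSucc) * Dm (x (Fin.last n)) := by
  rw [Dlist, List.ofFn_succ', List.prod_concat]; rfl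

lemma key (k : ℕ) (hk : 1 ≤ k) (p : R × (Fin k → R)) :
    Dm p.1 * Dlist p.2 * tm * Dm (-p.1) = Dlist (shiftMap k p) := by
  obtain ⟨m, rfl⟩ : ∃ m, k = m + 1 := ⟨k - 1, by omega⟩
  have lhs : Dm p.1 * Dlist p.2 * tm * Dm (-p.1)
      = Dm p.1 * Dlist (fun i : Fin m => p.2 i.castSucc)
          * Dm (p.2 (Fin.last m) - p.1) := by
    rw [Dlist_succ' p.2, ← DtD (p.2 (Fin.last m)) p.1]
    noncomm_ring
  rw [lhs, Dlist_succ (shiftMap (m+1) p),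
    Dlist_succ' (fun i : Fin (m+1) => shiftMap (m+1) p i.succ)]
  have h0 : shiftMap (m+1) p 0 = p.1 := sm0 p 0 rfl
  have hl : shiftMap (m+1) p (Fin.last m).succ = p.2 (Fin.last m) - p.1 := by
    rw [smk (by omega) p _ (by simp [Fin.last])]
    congr 1
  have hm : (fun i : Fin m => shiftMap (m+1) p (Fin.castSucc i).succ)
      = fun i : Fin m => p.2 i.castSucc := by
    funext i
    rw [smmid p _ (by simp) (by have := i.isLt; simp; omega)]
    congr 1
  rw [h0, hl, hm, mul_assoc]

/-- A tuple `(b₁, a₁, …, a_k)` satisfies `A = D(b₁)D(a₁)⋯D(a_k) t D(-b₁) t^{k+1}`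
iff `(b₁, a₁, …, a_{k-1}, a_k - b₁)` satisfies `A = D(x₁)⋯D(x_{k+1}) t^{k+1}`;
hence `V̄_{1,k}(A)(R)` and `V̄_{k+1}(A)(R)` are in bijection via this linear
change of coordinates. -/
theorem stmt16 (R : Type) [CommRing R] (A : Matrix (Fin 2) (Fin 2) R)
    (hA : A.det = 1) (k : ℕ) (hk : 1 ≤ k) :
    (∀ p : R × (Fin k → R),
      (A = Dm p.1 * Dlist p.2 * tm * Dm (-p.1) * tm ^ (k + 1)) ↔
        (A = Dlist (shiftMap k p) * tm ^ (k + 1))) ∧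
    Set.BijOn (shiftMap k)
      {p : R × (Fin k → R) | A = Dm p.1 * Dlist p.2 * tm * Dm (-p.1) * tm ^ (k + 1)}
      {x : Fin (k + 1) → R | A = Dlist x * tm ^ (k + 1)} := by
  have hiff : ∀ p : R × (Fin k → R),
      (A = Dm p.1 * Dlist p.2 * tm * Dm (-p.1) * tm ^ (k + 1)) ↔
        (A = Dlist (shiftMap k p) * tm ^ (k + 1)) := by
    intro p; rw [key k hk p]
  refine ⟨hiff, ?_, ?_, ?_⟩
  · intro p hp
    exact (hiff p).mp hp
  · -- InjOn
    intro p hp q hq h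
    have hb : p.1 = q.1 := by
      have := congrFun h ⟨0, by omega⟩
      rwa [sm0 p _ rfl, sm0 q _ rfl] at this
    have ha : p.2 = q.2 := by
      funext i
      by_cases hik : (i : ℕ) = k - 1
      · have e := congrFun h ⟨k, by omega⟩
        rw [smk hk p _ rfl, smk hk q _ rfl] at e
        have e2 : p.2 ⟨k-1, by omega⟩ = q.2 ⟨k-1, by omega⟩ := by
          linear_combination e + hb
        have hi : i = ⟨k-1, by omega⟩ := by ext; simpa using hik
        rw [hi]; exact e2
      · have e := congrFun h ⟨(i : ℕ) + 1, by have := i.isLt; omega⟩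
        rw [smmid p _ (by simp) (by have := i.isLt; simp; omega),
          smmid q _ (by simp) (by have := i.isLt; simp; omega)] at e
        simpa using e
    exact Prod.ext hb ha
  · -- SurjOn
    intro x hx
    set p : R × (Fin k → R) :=
      (x 0, fun i => if (i : ℕ) = k - 1 then x ⟨k, by omega⟩ + x 0
        else x ⟨(i : ℕ) + 1, by have := i.isLt; omega⟩) with hp
    have hsx : shiftMap k p = x := by
      funext j
      rcases Nat.eq_zero_or_pos (j : ℕ) with hj | hj
      · rw [sm0 p j hj]
        show x 0 = x j
        congr 1
        ext; simp [hj]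
      · by_cases hjk : (j : ℕ) = k
        · rw [smk hk p j hjk]
          show (if (k - 1 : ℕ) = k - 1 then x ⟨k, by omega⟩ + x 0
            else x ⟨(k-1 : ℕ) + 1, by omega⟩) - x 0 = x j
          rw [if_pos rfl]
          have hxj : (⟨k, by omega⟩ : Fin (k+1)) = j := by ext; simp [hjk]
          rw [hxj]; ring
        · rw [smmid p j (by omega) hjk]
          show (if ((j : ℕ) - 1 : ℕ) = k - 1 then x ⟨k, by omega⟩ + x 0
            else x ⟨((j : ℕ) - 1 : ℕ) + 1, by have := j.isLt; omega⟩) = x j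
          rw [if_neg (by have := j.isLt; omega)]
          congr 1
          ext; have := j.isLt; simp; omega
    refine ⟨p, ?_, hsx⟩
    show A = Dm p.1 * Dlist p.2 * tm * Dm (-p.1) * tm ^ (k + 1)
    rw [key k hk p, hsx]
    exact hx
end
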